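/- arXiv:2408.01564 — 2 statements merged into one kernel-verified Lean document; each statement's English description precedes it below -/
import Mathlib

section
/- The central element U₀ of B is a cycle for the full differential: μ₁(U₀) = 0, where U₀ is the sum of all 2N full alternating loops of length N, namely U₀ = Σ_{i=1}^{N} ρ_i σ_{i−1} ρ_{i−1} ⋯ ρ_{i+1} σ_i + Σ_{i=1}^{N} σ_{i−1} ρ_{i−1} ⋯ σ_i ρ_i (each summand containing all N ρ-letters and all N σ-letters). -/
open scoped Classical

noncomputable section

namespace StarPaper

/-- The ground ring `R = F₂[V₀, V₁, …, V_{N+1}]`. -/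
abbrev R (N : ℕ) := MvPolynomial (Fin (N + 2)) (ZMod 2)

/-- The variable `V₀`. -/
def V0 (N : ℕ) : R N := MvPolynomial.X 0

open Fin.NatCast in
/-- The variable `V_{i}` for an index `i` counted mod `N` (so `1 ≤ i ≤ N`). -/
def Vof (N : ℕ) (z : ZMod N) : R N := MvPolynomial.X ((z.val + 1 : ℕ) : Fin (N + 2))

open Fin.NatCast in
/-- The variable `V_{N+1}`. -/
def VN1 (N : ℕ) : R N := MvPolynomial.X (((N + 1 : ℕ)) : Fin (N + 2))

/-- The Alexander grading group `ℤ^{2N}`, with coordinates indexed by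
`(i, false) ↔ ē_{2i-1}` (the `U`/odd slots) and `(i, true) ↔ ē_{2i}` (the `s`/even slots). -/
abbrev Gr (N : ℕ) := ZMod N × Bool → ℤ

/-- The standard basis vector of the Alexander grading group. -/
def gsl {N : ℕ} (p : ZMod N × Bool) : Gr N := fun x => if x = p then 1 else 0

/-- The constant grading vector `j · Σ_{k=1}^{2N} ē_k`. -/
def constG (N : ℕ) (j : ℕ) : Gr N := fun _ => (j : ℤ)

/-! ### The dual algebra `B` -/

/-- Basis words of the dual algebra `B`: idempotents `ι_i`, lone letters `ρ_i`, and
strictly alternating words `gen i l r lf` with `l+1` σ-letters `σ_i, …, σ_{i+l}`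
(composed right-to-left), all interior ρ-letters present, an optional right flanking
`ρ_i` (`r`) and an optional left flanking `ρ_{i+l+1}` (`lf`). -/
inductive BWord (N : ℕ) : Type
  | idem (i : ZMod N)
  | rho (i : ZMod N)
  | gen (i : ZMod N) (l : ℕ) (r : Bool) (lf : Bool)
  deriving DecidableEq

instance (N : ℕ) : Inhabited (BWord N) := ⟨BWord.idem 0⟩

namespace BWord
variable {N : ℕ}

/-- Initial (rightmost) idempotent. -/
def initB : BWord N → ZMod N
  | idem i => i
  | rho i => i
  | gen i _ _ _ => i

/-- Final (leftmost) idempotent. -/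
def finB : BWord N → ZMod N
  | idem i => i
  | rho i => i
  | gen i l _ _ => i + ((l + 1 : ℕ) : ZMod N)

/-- The length `ℓ(τ)`: the number of σ-letters. -/
def lenB : BWord N → ℕ
  | gen _ l _ _ => l + 1
  | _ => 0

/-- Right-flanked: the rightmost letter is a `ρ`. -/
def rFl : BWord N → Prop
  | gen _ _ r _ => r = true
  | rho _ => True
  | idem _ => False

/-- Left-flanked: the leftmost letter is a `ρ`. -/
def lFl : BWord N → Prop
  | gen _ _ _ lf => lf = true
  | rho _ => True
  | idem _ => False

/-- Multiplication of basis words of `B` (right-to-left composition, so `mulB x y = x·y`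
with `y` acting first); `none` means the product is zero.  This encodes the relations
`ρρ = 0` and `σσ = 0`. -/
def mulB : BWord N → BWord N → Option (BWord N)
  | idem i, idem j => if i = j then some (idem i) else none
  | idem i, rho j => if i = j then some (rho j) else none
  | idem i, gen j l r lf => if i = j + ((l + 1 : ℕ) : ZMod N) then some (gen j l r lf) else none
  | rho i, idem j => if i = j then some (rho i) else none
  | rho _, rho _ => none
  | rho i, gen j l r lf =>
      if i = j + ((l + 1 : ℕ) : ZMod N) ∧ lf = false then some (gen j l r true) else none
  | gen i l r lf, idem j => if j = i then some (gen i l r lf) else none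
  | gen i l r lf, rho j => if j = i ∧ r = false then some (gen i l true lf) else none
  | gen i' l' r' lf', gen i l r lf =>
      if i' = i + ((l + 1 : ℕ) : ZMod N) ∧ (lf ≠ r') then some (gen i (l + l' + 1) r lf')
      else none

end BWord

/-- The free `R`-module underlying `B`, with basis the words. -/
abbrev BMod (N : ℕ) := BWord N →₀ R N

/-- A basis word viewed as an element of `B`. -/
def ofB {N : ℕ} (w : BWord N) : BMod N := Finsupp.single w 1

/-- The full differential `μ₁` of `B` on basis words: the Leibniz differential
(`μ₁ρ_i = V_i`, `μ₁σ_i = 0`; only flanking ρ-letters contribute) for length `< N`,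
together with the window-cutting terms in the length `≥ N` cases, according to the
four flanking cases. -/
def mu1W (N : ℕ) : BWord N → BMod N
  | .idem _ => 0
  | .rho i => Vof N i • ofB (.idem i)
  | .gen i l r lf =>
      (if r then Vof N i • ofB (.gen i l false lf) else 0)
      + (if lf then Vof N (i + ((l + 1 : ℕ) : ZMod N)) • ofB (.gen i l r false) else 0)
      + (if N ≤ l + 1 ∧ lf = false then
          (VN1 N * ∏ t ∈ Finset.range (N - 1), Vof N (i + ((l + 2 - N + t : ℕ) : ZMod N))) •
            (if N ≤ l then ofB (.gen i (l - N) r true)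
             else if r then ofB (.rho i) else ofB (.idem i))
         else 0)
      + (if N ≤ l + 1 ∧ r = false then
          (VN1 N * ∏ t ∈ Finset.range (N - 1), Vof N (i + ((t + 1 : ℕ) : ZMod N))) •
            (if N ≤ l then ofB (.gen (i + (N : ZMod N)) (l - N) true lf)
             else if lf then ofB (.rho (i + (N : ZMod N))) else ofB (.idem (i + (N : ZMod N))))
         else 0)

/-- The differential `μ₁`, extended `R`-linearly to all of `B`. -/
def mu1M (N : ℕ) (x : BMod N) : BMod N := x.sum fun w c => c • mu1W N w

/-- Total length of a composable sequence of words (the list is written in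
composition order `[τ₁, …, τ_k]`). -/
def totB {N : ℕ} (l : List (BWord N)) : ℕ := (l.map BWord.lenB).sum

/-- Consecutive inputs compose (`(τ_k, …, τ₁)` is written `[τ₁, …, τ_k]`). -/
def chainB {N : ℕ} (l : List (BWord N)) : Prop :=
  l.Chain' (fun x y => x.finB = y.initB)

/-- Condition (S1): some proper top part `(τ_k, …, τ_m)`, `m > 1`, has total length `≥ N`. -/
def S1 (N : ℕ) (l : List (BWord N)) : Prop :=
  ∃ m, 1 ≤ m ∧ m < l.length ∧ N ≤ totB (l.drop m)

/-- Condition (S2): some proper bottom part `(τ_m, …, τ₁)`, `m < k`, has total length `≥ N`. -/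
def S2 (N : ℕ) (l : List (BWord N)) : Prop :=
  ∃ m, 1 ≤ m ∧ m < l.length ∧ N ≤ totB (l.take m)

/-- The product of the variables `V_λ` over the interior ρ-letters of a word. -/
def intProd (N : ℕ) : BWord N → R N
  | .gen i l _ _ => ∏ t ∈ Finset.range l, Vof N (i + ((t + 1 : ℕ) : ZMod N))
  | _ => 1

/-- Shape conditions on the terms of an allowable sequence: interior terms begin and
end with a σ-letter, `τ₁` begins with a σ (possibly ending with a ρ), and `τ_k` ends
with a σ (possibly beginning with a ρ). -/
def endsOK (N : ℕ) (l : List (BWord N)) : Prop :=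
  (∃ i li r, l.headI = BWord.gen i li r false) ∧
  (∃ i li lf, l.getLastI = BWord.gen i li false lf) ∧
  (∀ m, 0 < m → m + 1 < l.length → ∃ i li, l[m]? = some (BWord.gen i li false false))

/-- Allowable sequences (for the high-length products `μ_k`, `2 ≤ k ≤ N`). -/
def allow (N : ℕ) (l : List (BWord N)) : Prop :=
  2 ≤ l.length ∧ l.length ≤ N ∧ chainB l ∧ N ≤ totB l ∧
  ¬(S1 N l ∧ S2 N l) ∧
  ¬(l.getLastI.lFl ∧ S2 N l ∧ ¬ S1 N l) ∧
  ¬(l.headI.rFl ∧ S1 N l ∧ ¬ S2 N l) ∧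
  ¬(l.getLastI.lFl ∧ l.headI.rFl) ∧
  endsOK N l

/-- The bottom-cut term: the window of the bottom `N` σ-steps is swept out and
converted into `V_{N+1}·∏{V_λ}`, leaving the remaining top factor of `τ_k`. -/
def botTerm (N : ℕ) (l : List (BWord N)) : BMod N :=
  match l.getLastI with
  | .gen ik lk _ lfk =>
    if 1 ≤ N - totB l.dropLast ∧ N - totB l.dropLast ≤ lk then
      (VN1 N * ((l.dropLast.map (intProd N)).prod) *
        ∏ t ∈ Finset.range (N - totB l.dropLast - 1), Vof N (ik + ((t + 1 : ℕ) : ZMod N))) •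
        ofB (.gen (ik + ((N - totB l.dropLast : ℕ) : ZMod N)) (lk - (N - totB l.dropLast))
              true lfk)
    else 0
  | _ => 0

/-- The top-cut term: the window of the top `N` σ-steps is swept out, leaving the
remaining bottom factor of `τ₁`. -/
def topTerm (N : ℕ) (l : List (BWord N)) : BMod N :=
  match l.headI with
  | .gen i1 l1 r1 _ =>
    if 1 ≤ N - totB l.tail ∧ N - totB l.tail ≤ l1 then
      (VN1 N * ((l.tail.map (intProd N)).prod) *
        ∏ t ∈ Finset.range (N - totB l.tail - 1),
          Vof N (i1 + ((l1 + 1 - (N - totB l.tail) + t + 1 : ℕ) : ZMod N))) •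
        ofB (.gen i1 (l1 - (N - totB l.tail)) r1 true)
    else 0
  | _ => 0

/-- The value of a high-length product on an allowable sequence: for total length `N`
there is a single cut; for total length `> N`, the sum of the bottom-cut and top-cut
terms over the permitted cut directions (never counting from a flanked or
stretching-too-far end). -/
def highVal (N : ℕ) (l : List (BWord N)) : BMod N :=
  if totB l = N then
    (VN1 N * (l.map (intProd N)).prod) •
      ofB (if l.getLastI.lFl ∨ l.headI.rFl then BWord.rho l.headI.initB
           else BWord.idem l.headI.initB)
  else
    (if ¬ S2 N l ∧ ¬ l.headI.rFl then botTerm N l else 0)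
    + (if ¬ S1 N l ∧ ¬ l.getLastI.lFl then topTerm N l else 0)

/-- The operations `μ_k` of `B` on sequences of basis words (the list is in composition
order `[τ₁, …, τ_k]`): `μ₁` is the full differential, `μ₂` is the concatenation product
together with the high-length binary products, `μ_k` for `2 ≤ k ≤ N` the high-length
products on allowable sequences, and all other operations vanish. -/
def muB (N : ℕ) (l : List (BWord N)) : BMod N :=
  if l.length = 1 then mu1W N l.headI
  else if 2 ≤ l.length then
    (if l.length = 2 then (BWord.mulB l.getLastI l.headI).elim 0 ofB else 0)
    + (if allow N l then highVal N l else 0)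
  else 0

/-- The central element `U₀` of `B`: the sum of all `2N` full alternating loops of
length `N`, namely `Σ_{i=1}^N ρ_i σ_{i-1} ρ_{i-1} ⋯ ρ_{i+1} σ_i`
(left-flanked loops) plus `Σ_{i=1}^N σ_{i-1} ρ_{i-1} ⋯ σ_i ρ_i` (right-flanked loops),
each summand containing all `N` ρ-letters and all `N` σ-letters. -/
def U0elt (N : ℕ) : BMod N :=
  (∑ i ∈ Finset.range N, ofB (BWord.gen (i : ZMod N) (N - 1) false true))
  + ∑ i ∈ Finset.range N, ofB (BWord.gen (i : ZMod N) (N - 1) true false)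

/-! Stripping the flank of a full loop at `i` leaves `V_i` times the unflanked loop, and
cutting its only window leaves `V_{N+1}·∏ V_λ` times `ρ_i`; since `i + N = i`, the left- and
right-flanked loops at `i` produce the same two terms, which cancel in characteristic two. -/

lemma mu1M_ofB (N : ℕ) (w : BWord N) : mu1M N (ofB w) = mu1W N w := by
  simp [mu1M, ofB, Finsupp.sum_single_index]

lemma mu1M_sum {N : ℕ} {ι : Type*} (s : Finset ι) (f : ι → BMod N) :
    mu1M N (∑ i ∈ s, f i) = ∑ i ∈ s, mu1M N (f i) :=
  (Finsupp.sum_finsetSum_index (h := fun w c => c • mu1W N w) (fun _ => zero_smul _ _)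
    (fun _ _ _ => add_smul _ _ _)).symm

lemma mu1M_add (N : ℕ) (x y : BMod N) : mu1M N (x + y) = mu1M N x + mu1M N y :=
  Finsupp.sum_add_index' (fun _ => zero_smul _ _) (fun _ _ _ => add_smul _ _ _)

lemma BMod.add_self {N : ℕ} (x : BMod N) : x + x = 0 := by
  ext w : 1
  exact CharTwo.add_self_eq_zero (x w)

def loopBoundary (N : ℕ) (i : ZMod N) : BMod N :=
  Vof N i • ofB (.gen i (N - 1) false false)
    + (VN1 N * ∏ t ∈ Finset.range (N - 1), Vof N (i + ((t + 1 : ℕ) : ZMod N))) •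
        ofB (.rho i)

lemma mu1W_gen_left_flanked_loop {N : ℕ} (hN : 0 < N) (i : ZMod N) :
    mu1W N (.gen i (N - 1) false true) = loopBoundary N i := by
  have hlen : N - 1 + 1 = N := Nat.sub_add_cancel hN
  have hshort : ¬ N ≤ N - 1 := by omega
  simp [mu1W, loopBoundary, hlen, hshort]

lemma mu1W_gen_right_flanked_loop {N : ℕ} (hN : 0 < N) (i : ZMod N) :
    mu1W N (.gen i (N - 1) true false) = loopBoundary N i := by
  have hlen : N - 1 + 1 = N := Nat.sub_add_cancel hN
  have hshort : ¬ N ≤ N - 1 := by omega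
  have hwindow : N - 1 + 2 - N = 1 := by omega
  simp only [mu1W, loopBoundary, hlen, hshort, hwindow, Nat.add_comm 1]
  simp

theorem U0_is_a_cycle_general (N : ℕ) : mu1M N (U0elt N) = 0 := by
  rw [U0elt, mu1M_add, mu1M_sum, mu1M_sum, ← Finset.sum_add_distrib]
  refine Finset.sum_eq_zero fun i hi => ?_
  have hN : 0 < N := Nat.zero_lt_of_lt (Finset.mem_range.mp hi)
  rw [mu1M_ofB, mu1M_ofB, mu1W_gen_left_flanked_loop hN, mu1W_gen_right_flanked_loop hN]
  exact BMod.add_self _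

/-- The central element `U₀` of `B` is a cycle for the full
differential: `μ₁(U₀) = 0`. -/
theorem U0_is_a_cycle (N : ℕ) (hN : 3 ≤ N) : mu1M N (U0elt N) = 0 :=
  U0_is_a_cycle_general N

end StarPaper
end
end

section
/- Two-sided cut decomposition (Lemma 5.13): let (τ_k, …, τ₁), k ≥ 1, be a composable sequence of alternating words in B of total length strictly greater than N, with τ_k not left-flanked and τ₁ not right-flanked, satisfying neither (S1) nor (S2). Let i be the initial idempotent of τ₁ and j the final idempotent of τ_k, and let Λ = σ_{j−1}ρ_{j−1}σ_{j−2}⋯ρ_{i+1}σ_i be the full alternating word from i to j. Counting N σ-steps from the left end of the sequence yields a cut point inside τ₁, with remainder τ₁′ (the part of τ₁ to the right of the cut); counting N σ-steps from the right end yields a cut point inside τ_k, with remainder τ_k′ (the part of τ_k to the left of the cut). Then τ₁′ = ρ_j·Λ and τ_k′ = Λ·ρ_i; moreover for every idempotent index λ lying in both windows, a ρ_λ-letter occurs between the corresponding consecutive σ-letters in the left window if and only if it does in the right window. -/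
open scoped Classical

noncomputable section

namespace StarPaper

/-- Letters of words of `B`. -/
inductive BLet (N : ℕ)
  | sg (i : ZMod N)
  | rh (i : ZMod N)
  deriving DecidableEq

/-- The list of letters of a word, in right-to-left (composition) order. -/
def lettersOf {N : ℕ} : BWord N → List (BLet N)
  | .idem _ => []
  | .rho i => [BLet.rh i]
  | .gen i l r lf =>
      (if r then [BLet.rh i] else []) ++
      ((List.range (l + 1)).flatMap fun t =>
        (if t = 0 then [] else [BLet.rh (i + (t : ZMod N))]) ++ [BLet.sg (i + (t : ZMod N))]) ++
      (if lf then [BLet.rh (i + ((l + 1 : ℕ) : ZMod N))] else [])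

/-- All the letters of a sequence `[τ₁, …, τ_k]`, in right-to-left order. -/
def seqLetters {N : ℕ} (l : List (BWord N)) : List (BLet N) := (l.map lettersOf).flatten

/-- Is the letter a σ? -/
def isSg {N : ℕ} : BLet N → Bool
  | .sg _ => true
  | _ => false

/-- Some ρ-letter occurs between the `p`-th and `(p+1)`-st σ-letters of the letter list
(σ-letters counted from `0` starting at the right end). -/
def slotRho {N : ℕ} (L : List (BLet N)) (p : ℕ) : Prop :=
  ∃ n j, L[n]? = some (BLet.rh j) ∧ (L.take n).countP (fun a => isSg a) = p + 1

/-!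
Without (S1) and (S2), the words after `τ₁` have total length `< N`, and so have the words
before `τ_k`; hence both cuts fall inside `τ₁` resp. `τ_k`, at depth `L - N` from the outer end.
Composability gives `j = i + L`, which is `i + (L - N)` modulo `N`, so the two remainders are
`ρ_j Λ` and `Λ ρ_i`. Two window slots `p_L ≥ L - N` and `p_R < N - 1` with the same residue
either coincide or lie `N` apart; in the latter case `p_R` is an interior slot of `τ₁` and
`p_L` one of `τ_k`, and interior slots of a word carry their ρ-letter (`lettersOf` omits it
only at offsets divisible by `N`, which these slots avoid).
-/

lemma natCast_zmod_ne_zero {N a : ℕ} (h0 : 0 < a) (ha : a < N) : (a : ZMod N) ≠ 0 :=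
  (ZMod.natCast_eq_zero_iff a N).not.mpr (Nat.not_dvd_of_pos_of_lt h0 ha)

lemma eq_or_add_le_of_natCast_zmod_eq {N a b : ℕ} (h : (a : ZMod N) = b) (hb : b < N) :
    a = b ∨ b + N ≤ a := by
  rw [ZMod.natCast_eq_natCast_iff', Nat.mod_eq_of_lt hb] at h
  rcases Nat.lt_or_ge a N with ha | ha
  · exact .inl (by rwa [Nat.mod_eq_of_lt ha] at h)
  · have := Nat.mod_le (a - N) N
    rw [← Nat.mod_eq_sub_mod ha] at this
    exact .inr (by omega)

lemma dropLast_append_getLastI {α : Type*} [Inhabited α] {l : List α} (hl : l ≠ []) :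
    l.dropLast ++ [l.getLastI] = l := by
  rw [List.getLastI_eq_getLast?_getD, List.getLast?_eq_some_getLast hl]
  exact List.dropLast_append_getLast hl

namespace BWord

variable {N : ℕ}

lemma finB_eq_initB_add_lenB (w : BWord N) : w.finB = w.initB + (w.lenB : ZMod N) := by
  cases w <;> simp [finB, initB, lenB]

lemma exists_eq_gen_of_not_rFl {w : BWord N} (hpos : 0 < w.lenB) (hw : ¬ w.rFl) :
    ∃ i l lf, w = gen i l false lf := by
  cases w with
  | gen i l r lf => cases r <;> simp_all [rFl]
  | _ => simp [lenB] at hpos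

lemma exists_eq_gen_of_not_lFl {w : BWord N} (hpos : 0 < w.lenB) (hw : ¬ w.lFl) :
    ∃ i l r, w = gen i l r false := by
  cases w with
  | gen i l r lf => cases lf <;> simp_all [lFl]
  | _ => simp [lenB] at hpos

lemma mulB_rho_gen {i j : ZMod N} {m : ℕ} {r : Bool} (h : j = i + ((m + 1 : ℕ) : ZMod N)) :
    mulB (rho j) (gen i m r false) = some (gen i m r true) := by
  simp [mulB, h]

lemma mulB_gen_rho (i : ZMod N) (m : ℕ) (lf : Bool) :
    mulB (gen i m false lf) (rho i) = some (gen i m true lf) := by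
  simp [mulB]

end BWord

section Sequences

variable {N : ℕ}

lemma totB_eq_lenB_headI_add (l : List (BWord N)) : totB l = l.headI.lenB + totB l.tail := by
  cases l <;> rfl

lemma totB_eq_totB_dropLast_add (l : List (BWord N)) :
    totB l = totB l.dropLast + l.getLastI.lenB := by
  rcases eq_or_ne l [] with rfl | hl
  · rfl
  · conv_lhs => rw [← dropLast_append_getLastI hl]
    simp [totB]

lemma totB_tail_lt_of_not_S1 (hN : 0 < N) {l : List (BWord N)} (h : ¬ S1 N l) :
    totB l.tail < N := by
  by_contra! hle
  have hlen : 1 < l.length := by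
    by_contra! hlen
    rw [List.eq_nil_of_length_eq_zero (by simp; omega : l.tail.length = 0)] at hle
    simp [totB] at hle
    omega
  exact h ⟨1, le_rfl, hlen, by rwa [List.drop_one]⟩

lemma totB_dropLast_lt_of_not_S2 (hN : 0 < N) {l : List (BWord N)} (h : ¬ S2 N l) :
    totB l.dropLast < N := by
  by_contra! hle
  have hlen : 1 < l.length := by
    by_contra! hlen
    rw [List.eq_nil_of_length_eq_zero (by simp; omega : l.dropLast.length = 0)] at hle
    simp [totB] at hle
    omega
  exact h ⟨l.length - 1, by omega, by omega, by rwa [← List.dropLast_eq_take]⟩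

lemma lenB_headI_le_totB_dropLast {l : List (BWord N)} (h : 2 ≤ l.length) :
    l.headI.lenB ≤ totB l.dropLast := by
  match l, h with
  | w :: v :: t, _ => simp [List.dropLast_cons_cons, totB]

lemma finB_getLastI_of_chainB {l : List (BWord N)} (hc : chainB l) :
    l.getLastI.finB = l.headI.initB + (totB l : ZMod N) := by
  induction l with
  | nil => simp [totB]; rfl
  | cons w ws ih =>
    cases ws with
    | nil => simpa [totB, List.getLastI] using w.finB_eq_initB_add_lenB
    | cons v t =>
      obtain ⟨hwv, hc'⟩ := List.isChain_cons_cons.mp hc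
      have hlast : (w :: v :: t).getLastI = (v :: t).getLastI := by
        simp [List.getLastI_eq_getLast?_getD]
      rw [hlast, ih hc', List.headI_cons, List.headI_cons, ← hwv, w.finB_eq_initB_add_lenB]
      simp only [totB, List.map_cons, List.sum_cons, Nat.cast_add]
      ring

end Sequences

section Letters

variable {N : ℕ}

def stepLetters (i : ZMod N) (t : ℕ) : List (BLet N) :=
  (if (t : ZMod N) = 0 then [] else [BLet.rh (i + (t : ZMod N))]) ++ [BLet.sg (i + (t : ZMod N))]

def bodyLetters (i : ZMod N) (l : ℕ) : List (BLet N) :=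
  (List.range (l + 1)).flatMap (stepLetters i)

lemma lettersOf_gen (i : ZMod N) (l : ℕ) (r lf : Bool) :
    lettersOf (BWord.gen i l r lf) =
      (if r then [BLet.rh i] else []) ++ bodyLetters i l ++
      (if lf then [BLet.rh (i + ((l + 1 : ℕ) : ZMod N))] else []) := by
  simp [lettersOf, bodyLetters, List.flatMap_assoc]
  rfl

lemma bodyLetters_succ (i : ZMod N) (l : ℕ) :
    bodyLetters i (l + 1) = bodyLetters i l ++ stepLetters i (l + 1) := by
  simp [bodyLetters, List.range_succ]

lemma countP_isSg_bodyLetters (i : ZMod N) (l : ℕ) :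
    (bodyLetters i l).countP (fun a => isSg a) = l + 1 := by
  induction l with
  | zero => simp [bodyLetters, stepLetters, isSg]
  | succ n ih =>
    rw [bodyLetters_succ, List.countP_append, ih]
    simp [stepLetters, isSg]

lemma bodyLetters_prefix (i : ZMod N) {m l : ℕ} (h : m ≤ l) :
    bodyLetters i m <+: bodyLetters i l := by
  induction l, h using Nat.le_induction with
  | base => exact List.prefix_refl _
  | succ n _ ih => exact ih.trans (bodyLetters_succ i n ▸ List.prefix_append _ _)

lemma countP_isSg_lettersOf (w : BWord N) :
    (lettersOf w).countP (fun a => isSg a) = w.lenB := by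
  cases w with
  | gen i l r lf =>
    rw [lettersOf_gen, List.countP_append, List.countP_append, countP_isSg_bodyLetters]
    cases r <;> cases lf <;> simp [isSg, BWord.lenB]
  | _ => simp [lettersOf, BWord.lenB, isSg]

lemma countP_isSg_seqLetters (ws : List (BWord N)) :
    (seqLetters ws).countP (fun a => isSg a) = totB ws := by
  induction ws with
  | nil => simp [seqLetters, totB]
  | cons w t ih =>
    simp only [seqLetters, List.map_cons, List.flatten_cons, List.countP_append] at ih ⊢
    rw [ih, countP_isSg_lettersOf]
    simp [totB]

lemma slotRho_append_rh {L L' : List (BLet N)} {p : ℕ} (j : ZMod N)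
    (h : L.countP (fun a => isSg a) = p + 1) : slotRho (L ++ BLet.rh j :: L') p :=
  ⟨L.length, j, by simp, by simp [h]⟩

lemma slotRho_append_left {L₁ L₂ : List (BLet N)} {p : ℕ} (h : slotRho L₁ p) :
    slotRho (L₁ ++ L₂) p := by
  obtain ⟨n, j, h1, h2⟩ := h
  have hn : n < L₁.length := (List.getElem?_eq_some_iff.mp h1).1
  exact ⟨n, j, by rw [List.getElem?_append_left hn, h1],
    by rw [List.take_append_of_le_length hn.le, h2]⟩

lemma slotRho_append_right {L₁ L₂ : List (BLet N)} {p : ℕ} (h : slotRho L₂ p) :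
    slotRho (L₁ ++ L₂) (L₁.countP (fun a => isSg a) + p) := by
  obtain ⟨n, j, h1, h2⟩ := h
  refine ⟨L₁.length + n, j, ?_, ?_⟩
  · rw [List.getElem?_append_right (Nat.le_add_right _ _), Nat.add_sub_cancel_left, h1]
  rw [List.take_length_add_append, List.countP_append, h2, Nat.add_assoc]

lemma slotRho_lettersOf_gen {i : ZMod N} {l p : ℕ} (r lf : Bool) (hp : p + 1 ≤ l)
    (hz : ((p + 1 : ℕ) : ZMod N) ≠ 0) : slotRho (lettersOf (BWord.gen i l r lf)) p := by
  obtain ⟨rest, hrest⟩ := bodyLetters_prefix i hp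
  rw [lettersOf_gen, ← hrest, bodyLetters_succ, stepLetters, if_neg hz]
  simp only [List.cons_append, List.append_assoc]
  rw [← List.append_assoc]
  apply slotRho_append_rh
  rw [List.countP_append, countP_isSg_bodyLetters]
  cases r <;> simp [isSg]

lemma slotRho_seqLetters_of_headI {l : List (BWord N)} {i : ZMod N} {m p : ℕ} {r lf : Bool}
    (hhead : l.headI = BWord.gen i m r lf) (hp : p + 1 ≤ m) (hz : ((p + 1 : ℕ) : ZMod N) ≠ 0) :
    slotRho (seqLetters l) p := by
  cases l with
  | nil => cases hhead
  | cons w ws =>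
    rw [List.headI_cons] at hhead
    subst hhead
    exact slotRho_append_left (slotRho_lettersOf_gen r lf hp hz)

lemma slotRho_seqLetters_of_getLastI {l : List (BWord N)} {i : ZMod N} {m p : ℕ} {r lf : Bool}
    (hlast : l.getLastI = BWord.gen i m r lf) (hp : p + 1 ≤ m)
    (hz : ((p + 1 : ℕ) : ZMod N) ≠ 0) : slotRho (seqLetters l) (totB l.dropLast + p) := by
  have hl : l ≠ [] := by rintro rfl; cases hlast
  have h := slotRho_append_right (L₁ := seqLetters l.dropLast)
    (L₂ := seqLetters [l.getLastI])
    (by simpa [seqLetters, hlast] using slotRho_lettersOf_gen r lf hp hz)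
  rwa [countP_isSg_seqLetters, seqLetters, seqLetters, ← List.flatten_append, ← List.map_append,
    dropLast_append_getLastI hl] at h

end Letters

section Window

variable {N : ℕ}

lemma slotRho_seqLetters_iff_of_natCast_eq (hN : 0 < N) {l : List (BWord N)}
    (hS1 : ¬ S1 N l) (hS2 : ¬ S2 N l) {i₁ ik : ZMod N} {l₁ lk : ℕ} {r₁ lf₁ rk lfk : Bool}
    (hhead : l.headI = BWord.gen i₁ l₁ r₁ lf₁) (hlast : l.getLastI = BWord.gen ik lk rk lfk)
    {pL pR : ℕ} (hpL : pL + 2 ≤ totB l) (hpR : pR + 2 ≤ N)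
    (hmod : (pL : ZMod N) = pR) :
    slotRho (seqLetters l) pL ↔ slotRho (seqLetters l) pR := by
  have htail := totB_tail_lt_of_not_S1 hN hS1
  have hdrop := totB_dropLast_lt_of_not_S2 hN hS2
  have hsplitH := totB_eq_lenB_headI_add l
  have hsplitL := totB_eq_totB_dropLast_add l
  rw [hhead, BWord.lenB] at hsplitH
  rw [hlast, BWord.lenB] at hsplitL
  rcases eq_or_add_le_of_natCast_zmod_eq hmod (by omega) with rfl | hle
  · rfl
  refine iff_of_true ?_
    (slotRho_seqLetters_of_headI hhead (by omega) (natCast_zmod_ne_zero (by omega) (by omega)))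
  -- the offset of `p_L` in `τ_k` is `< N` when `k ≥ 2`, and `≡ p_R + 1` when `k = 1`
  have hz : ((pL - totB l.dropLast + 1 : ℕ) : ZMod N) ≠ 0 := by
    rcases Nat.lt_or_ge l.length 2 with hk1 | hk2
    · rw [List.eq_nil_of_length_eq_zero (by simp; omega : l.dropLast.length = 0),
        show totB ([] : List (BWord N)) = 0 from rfl, Nat.sub_zero, Nat.cast_add, hmod,
        ← Nat.cast_add]
      exact natCast_zmod_ne_zero (by omega) (by omega)
    · have := lenB_headI_le_totB_dropLast hk2
      rw [hhead, BWord.lenB] at this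
      exact natCast_zmod_ne_zero (by omega) (by omega)
  simpa [Nat.add_sub_cancel' (by omega : totB l.dropLast ≤ pL)] using
    slotRho_seqLetters_of_getLastI hlast (by omega) hz

end Window

theorem two_sided_cut_decomposition_general (N : ℕ) (hN : 3 ≤ N) (l : List (BWord N))
    (hcomp : chainB l)
    (hL : N < totB l)
    (hLf : ¬ l.getLastI.lFl) (hRf : ¬ l.headI.rFl)
    (hS1 : ¬ S1 N l) (hS2 : ¬ S2 N l) :
    (∃ i₁ l₁ lf₁, l.headI = BWord.gen i₁ l₁ false lf₁ ∧ totB l - N ≤ l₁ ∧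
      -- the remainder of the left-counted cut is `ρ_j · Λ`, where `Λ` runs from `i₁`:
      BWord.mulB (BWord.rho l.getLastI.finB) (BWord.gen i₁ (totB l - N - 1) false false)
        = some (BWord.gen i₁ (totB l - N - 1) false true)) ∧
    (∃ ik lk rk, l.getLastI = BWord.gen ik lk rk false ∧ totB l - N ≤ lk ∧
      -- the remainder of the right-counted cut starts at `i` and is `Λ · ρ_i`:
      ik + ((lk + 1 - (totB l - N) : ℕ) : ZMod N) = l.headI.initB ∧
      BWord.mulB (BWord.gen l.headI.initB (totB l - N - 1) false false)
          (BWord.rho l.headI.initB)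
        = some (BWord.gen l.headI.initB (totB l - N - 1) true false)) ∧
    (∀ pL pR : ℕ, totB l - N ≤ pL → pL + 2 ≤ totB l → pR + 2 ≤ N →
      ((pL : ZMod N) = (pR : ZMod N)) →
      (slotRho (seqLetters l) pL ↔ slotRho (seqLetters l) pR)) := by
  have hN0 : 0 < N := by omega
  have hsplitH := totB_eq_lenB_headI_add l
  have hsplitL := totB_eq_totB_dropLast_add l
  have htail := totB_tail_lt_of_not_S1 hN0 hS1
  have hdrop := totB_dropLast_lt_of_not_S2 hN0 hS2
  obtain ⟨i₁, l₁, lf₁, hhead⟩ := BWord.exists_eq_gen_of_not_rFl (by omega) hRf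
  obtain ⟨ik, lk, rk, hlast⟩ := BWord.exists_eq_gen_of_not_lFl (by omega) hLf
  rw [hhead, BWord.lenB] at hsplitH
  rw [hlast, BWord.lenB] at hsplitL
  have hfin := finB_getLastI_of_chainB hcomp
  rw [hhead, hlast, BWord.finB, BWord.initB] at hfin
  have hcast : ((totB l - N : ℕ) : ZMod N) = totB l := by
    rw [Nat.cast_sub hL.le, ZMod.natCast_self, sub_zero]
  refine ⟨⟨i₁, l₁, lf₁, hhead, by omega, BWord.mulB_rho_gen ?_⟩,
    ⟨ik, lk, rk, hlast, by omega, ?_, BWord.mulB_gen_rho _ _ _⟩,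
    fun _ _ _ hpL hpR hmod =>
      slotRho_seqLetters_iff_of_natCast_eq hN0 hS1 hS2 hhead hlast hpL hpR hmod⟩
  · rw [hlast, BWord.finB, hfin, Nat.sub_add_cancel (by omega : 1 ≤ totB l - N), hcast]
  · rw [hhead, BWord.initB, Nat.cast_sub (by omega), hcast]
    linear_combination hfin

/-- Two-sided cut decomposition (Lemma 5.13).  Let `[τ₁, …, τ_k]` be a
composable sequence of alternating words of `B` of total length `L > N`, with `τ_k` not
left-flanked and `τ₁` not right-flanked, satisfying neither (S1) nor (S2); let
`i` be the initial idempotent of `τ₁`, `j` the final idempotent of `τ_k`, and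
`d = L - N`.  Then counting `N` σ-steps from the left yields a cut point inside `τ₁`
whose remainder `τ₁′` (the bottom `d` σ-steps of `τ₁` together with the boundary
ρ-letter) equals `ρ_j · Λ`, and counting `N` σ-steps from the right yields a cut point
inside `τ_k` whose remainder `τ_k′` equals `Λ · ρ_i`, where
`Λ = σ_{j-1} ρ_{j-1} ⋯ ρ_{i+1} σ_i` is the full alternating word from `i` to `j`;
moreover, for every idempotent index lying in both windows, a ρ-letter occurs between
the corresponding consecutive σ-letters in the left window iff it does in the right
window. -/
theorem two_sided_cut_decomposition (N : ℕ) (hN : 3 ≤ N) (l : List (BWord N))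
    (hk : 1 ≤ l.length) (hcomp : chainB l)
    (hL : N < totB l)
    (hLf : ¬ l.getLastI.lFl) (hRf : ¬ l.headI.rFl)
    (hS1 : ¬ S1 N l) (hS2 : ¬ S2 N l) :
    (∃ i₁ l₁ lf₁, l.headI = BWord.gen i₁ l₁ false lf₁ ∧ totB l - N ≤ l₁ ∧
      -- the remainder of the left-counted cut is `ρ_j · Λ`, where `Λ` runs from `i₁`:
      BWord.mulB (BWord.rho l.getLastI.finB) (BWord.gen i₁ (totB l - N - 1) false false)
        = some (BWord.gen i₁ (totB l - N - 1) false true)) ∧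
    (∃ ik lk rk, l.getLastI = BWord.gen ik lk rk false ∧ totB l - N ≤ lk ∧
      -- the remainder of the right-counted cut starts at `i` and is `Λ · ρ_i`:
      ik + ((lk + 1 - (totB l - N) : ℕ) : ZMod N) = l.headI.initB ∧
      BWord.mulB (BWord.gen l.headI.initB (totB l - N - 1) false false)
          (BWord.rho l.headI.initB)
        = some (BWord.gen l.headI.initB (totB l - N - 1) true false)) ∧
    (∀ pL pR : ℕ, totB l - N ≤ pL → pL + 2 ≤ totB l → pR + 2 ≤ N →
      ((pL : ZMod N) = (pR : ZMod N)) →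
      (slotRho (seqLetters l) pL ↔ slotRho (seqLetters l) pR)) :=
  two_sided_cut_decomposition_general N hN l hcomp hL hLf hRf hS1 hS2

end StarPaper
end
end
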